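/- Let a ∈ ℝ and let x : (a,∞) → ℝ^n be a function with x(t) ≠ 0 for all t, satisfying s_c^+(x(t)) ≤ s_c^-(x(t₀)) for all a < t₀ < t. Then there exists a time T > a such that for all τ ≥ T: s_c^-(x(τ)) = s_c^+(x(τ)), and no two cyclically consecutive entries of x(τ) are both zero (i.e. there is no index i with x_i(τ) = x_{i+1}(τ) = 0, indices taken modulo n). -/
import Mathlib


/-- Number of sign changes in a list of reals: the number of adjacent pairs
with strictly negative product. -/
noncomputable def signChanges : List ℝ → ℕ
  | a :: b :: l => (if a * b < 0 then 1 else 0) + signChanges (b :: l)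
  | _ => 0

/-- `s⁻` of a list: sign changes after deleting all zero entries. -/
noncomputable def sMinusList (l : List ℝ) : ℕ :=
  signChanges (l.filter (fun a => decide (a ≠ 0)))

/-- `s⁻(x)`: the number of sign changes in `x` after deleting all zero entries. -/
noncomputable def sMinus {n : ℕ} (x : Fin n → ℝ) : ℕ :=
  sMinusList (List.ofFn x)

/-- Replace each zero entry of `x` by `1` or `-1` according to `ε`. -/
noncomputable def replZeros {n : ℕ} (x : Fin n → ℝ) (ε : Fin n → Bool) : Fin n → ℝ :=
  fun i => if x i = 0 then (if ε i then 1 else -1) else x i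

/-- `s⁺(x)`: the maximal number of sign changes over all replacements of the
zero entries of `x` by `±1`. -/
noncomputable def sPlus {n : ℕ} (x : Fin n → ℝ) : ℕ :=
  Finset.univ.sup fun ε : Fin n → Bool => signChanges (List.ofFn (replZeros x ε))

/-- The cyclically rotated vector `[x i, …, x (n-1), x 0, …, x i]` (of length `n+1`),
as a list. -/
noncomputable def rotList {n : ℕ} (x : Fin n → ℝ) (i : Fin n) : List ℝ :=
  (List.ofFn x).rotate i.val ++ [x i]

/-- The cyclic sign variation count `s_c⁻(x)`: the maximum of `s⁻` over all
cyclic rotations `[x i, …, x (n-1), x 0, …, x i]`. -/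
noncomputable def sMinusC {n : ℕ} (x : Fin n → ℝ) : ℕ :=
  Finset.univ.sup fun i : Fin n => sMinusList (rotList x i)

/-- The cyclic sign variation count `s_c⁺(x)`: the maximum of `s⁺` over all
cyclic rotations, where the two copies of the entry `x i` at the two ends of a
rotation are replaced by the same sign. -/
noncomputable def sPlusC {n : ℕ} (x : Fin n → ℝ) : ℕ :=
  Finset.univ.sup fun p : (Fin n → Bool) × Fin n =>
    signChanges (rotList (replZeros x p.1) p.2)

/-- `A` is strictly sign-regular of order `k` (`SSR_k`): all `k×k` minors are
nonzero and have the same sign. -/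
def SSRof {n m : ℕ} (A : Matrix (Fin n) (Fin m) ℝ) (k : ℕ) : Prop :=
  (∀ (α : Fin k → Fin n) (β : Fin k → Fin m), StrictMono α → StrictMono β →
      0 < (A.submatrix α β).det) ∨
  (∀ (α : Fin k → Fin n) (β : Fin k → Fin m), StrictMono α → StrictMono β →
      (A.submatrix α β).det < 0)

/-- `A` is sign-regular of order `k` (`SR_k`): all `k×k` minors have the same
non-strict sign. -/
def SRof {n m : ℕ} (A : Matrix (Fin n) (Fin m) ℝ) (k : ℕ) : Prop :=
  (∀ (α : Fin k → Fin n) (β : Fin k → Fin m), StrictMono α → StrictMono β →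
      0 ≤ (A.submatrix α β).det) ∨
  (∀ (α : Fin k → Fin n) (β : Fin k → Fin m), StrictMono α → StrictMono β →
      (A.submatrix α β).det ≤ 0)

/-- A square matrix is Metzler if all its off-diagonal entries are nonnegative. -/
def IsMetzler {n : ℕ} (A : Matrix (Fin n) (Fin n) ℝ) : Prop :=
  ∀ i j : Fin n, i ≠ j → 0 ≤ A i j

/-- A square matrix is irreducible if the directed graph with an edge from `i`
to `j` whenever `i ≠ j` and `A i j ≠ 0` is strongly connected. -/
def IsIrreducibleMatrix {n : ℕ} (A : Matrix (Fin n) (Fin n) ℝ) : Prop :=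
  ∀ i j : Fin n, i ≠ j → Relation.TransGen (fun p q : Fin n => p ≠ q ∧ A p q ≠ 0) i j

/-- Membership in `Q`: Metzler, and the nonzero entries lie only on the main
diagonal, the super- and sub-diagonals, and the corner positions `(1,n)`, `(n,1)`
(in 0-indexed form: `(0, n-1)` and `(n-1, 0)`). -/
def memQ {n : ℕ} (A : Matrix (Fin n) (Fin n) ℝ) : Prop :=
  IsMetzler A ∧ ∀ i j : Fin n, A i j ≠ 0 →
    ((i : ℕ) = (j : ℕ) ∨ (j : ℕ) = (i : ℕ) + 1 ∨ (i : ℕ) = (j : ℕ) + 1 ∨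
      ((i : ℕ) = 0 ∧ (j : ℕ) = n - 1) ∨ ((i : ℕ) = n - 1 ∧ (j : ℕ) = 0))

/-- Membership in `Q⁺`: in `Q` and irreducible. -/
def memQplus {n : ℕ} (A : Matrix (Fin n) (Fin n) ℝ) : Prop :=
  memQ A ∧ IsIrreducibleMatrix A

/-- `P` is the permutation matrix of a cyclic shift `j ↦ j + k (mod n)`. -/
def IsCyclicPermMatrix {n : ℕ} (P : Matrix (Fin n) (Fin n) ℝ) : Prop :=
  ∃ k : ℕ, ∀ i j : Fin n, P i j = if (j : ℕ) % n = ((i : ℕ) + k) % n then 1 else 0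


/-! ### Auxiliary machinery -/

section Aux

/-- the last element of `s :: l` -/
def lastNZ (s : ℝ) : List ℝ → ℝ
  | [] => s
  | a :: t => lastNZ a t

lemma lastNZ_cons (s a : ℝ) (t : List ℝ) : lastNZ s (a :: t) = lastNZ a t := rfl

lemma lastNZ_append (w : List ℝ) : ∀ (s : ℝ) (z : List ℝ),
    lastNZ s (w ++ z) = lastNZ (lastNZ s w) z := by
  induction w with
  | nil => intro s z; rfl
  | cons a w ih => intro s z; simp [lastNZ_cons, ih]

lemma sc_cons_cons (a b : ℝ) (l : List ℝ) :
    signChanges (a :: b :: l) = (if a * b < 0 then 1 else 0) + signChanges (b :: l) := rfl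

lemma sc_single (a : ℝ) : signChanges [a] = 0 := rfl

lemma sc_append (w : List ℝ) : ∀ (s : ℝ) (z : List ℝ),
    signChanges (s :: (w ++ z)) = signChanges (s :: w) + signChanges (lastNZ s w :: z) := by
  induction w with
  | nil => intro s z; simp [lastNZ, sc_single]
  | cons a w ih =>
    intro s z
    simp only [List.cons_append, sc_cons_cons, ih, lastNZ_cons]
    omega

lemma pos_trans {a b c : ℝ} (h1 : 0 < a * b) (h2 : 0 < b * c) : 0 < a * c := by
  rcases lt_trichotomy a 0 with ha | ha | ha <;> rcases lt_trichotomy b 0 with hb | hb | hb <;>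
    rcases lt_trichotomy c 0 with hc | hc | hc <;>
    first
      | (exact mul_pos_of_neg_of_neg ha hc)
      | (exact mul_pos ha hc)
      | nlinarith

lemma neg_trans {a b c : ℝ} (h1 : 0 < a * b) (h2 : b * c < 0) : a * c < 0 := by
  rcases lt_trichotomy a 0 with ha | ha | ha <;> rcases lt_trichotomy b 0 with hb | hb | hb <;>
    rcases lt_trichotomy c 0 with hc | hc | hc <;>
    first
      | (exact mul_neg_of_neg_of_pos ha hc)
      | (exact mul_neg_of_pos_of_neg ha hc)
      | nlinarith

lemma neg_iff_of_pos {p q c : ℝ} (h : 0 < p * q) : p * c < 0 ↔ q * c < 0 := by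
  constructor
  · intro h2; exact neg_trans (by nlinarith : (0:ℝ) < q * p) h2
  · intro h2; exact neg_trans h h2

lemma sc_head_congr {p q : ℝ} (h : 0 < p * q) (z : List ℝ) :
    signChanges (p :: z) = signChanges (q :: z) := by
  cases z with
  | nil => rfl
  | cons c z' => simp only [sc_cons_cons, neg_iff_of_pos h]

noncomputable def cyc : List ℝ → ℕ
  | [] => 0
  | a :: t => signChanges (a :: (t ++ [a]))

lemma sc_le_cyc (l : List ℝ) : signChanges l ≤ cyc l := by
  cases l with
  | nil => simp [cyc, signChanges]
  | cons a t => simp only [cyc, sc_append t a [a]]; omega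

lemma cyc_rot1 (a : ℝ) (t : List ℝ) : cyc (a :: t) = cyc (t ++ [a]) := by
  cases t with
  | nil => rfl
  | cons b t' =>
    show signChanges (a :: ((b :: t') ++ [a])) = cyc (b :: (t' ++ [a]))
    simp only [cyc, List.cons_append, sc_cons_cons,
      sc_append (t' ++ [a]) b [b], lastNZ_append, lastNZ, sc_single]
    omega

lemma cyc_append_comm (H : List ℝ) : ∀ G : List ℝ, cyc (H ++ G) = cyc (G ++ H) := by
  induction H with
  | nil => intro G; simp
  | cons a H' ih =>
    intro G
    calc cyc ((a :: H') ++ G) = cyc (a :: (H' ++ G)) := by simp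
    _ = cyc ((H' ++ G) ++ [a]) := cyc_rot1 a _
    _ = cyc (H' ++ (G ++ [a])) := by simp
    _ = cyc ((G ++ [a]) ++ H') := ih _
    _ = cyc (G ++ (a :: H')) := by simp

open Classical in
noncomputable def fillFrom (s : ℝ) : List ℝ → List ℝ
  | [] => []
  | a :: t => if a = 0 then (if 0 < s then (1:ℝ) else -1) :: fillFrom (if 0 < s then (1:ℝ) else -1) t
              else a :: fillFrom a t

noncomputable def sgn (s : ℝ) : ℝ := if 0 < s then (1:ℝ) else -1

lemma fillFrom_nil (s : ℝ) : fillFrom s [] = [] := rfl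
lemma fillFrom_cons_zero (s : ℝ) (t : List ℝ) :
    fillFrom s (0 :: t) = sgn s :: fillFrom (sgn s) t := by
  simp [fillFrom, sgn]
lemma fillFrom_cons_nz {a : ℝ} (ha : a ≠ 0) (s : ℝ) (t : List ℝ) :
    fillFrom s (a :: t) = a :: fillFrom a t := by
  simp [fillFrom, ha]

lemma sgn_same_sign {s : ℝ} (hs : s ≠ 0) : 0 < s * sgn s := by
  rcases lt_or_gt_of_ne hs with h | h
  · simp only [sgn, if_neg (not_lt.mpr h.le), mul_neg, mul_one]; linarith
  · simp only [sgn, if_pos h, mul_one]; exact h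

lemma sgn_ne (s : ℝ) : sgn s ≠ 0 := by unfold sgn; split <;> norm_num

lemma filter_cons_zero (t : List ℝ) :
    List.filter (fun a => decide (a ≠ 0)) ((0:ℝ) :: t) = List.filter (fun a => decide (a ≠ 0)) t := by
  simp
lemma filter_cons_nz {a : ℝ} (ha : a ≠ 0) (t : List ℝ) :
    List.filter (fun a => decide (a ≠ 0)) (a :: t) = a :: List.filter (fun a => decide (a ≠ 0)) t := by
  simp [ha]

lemma fill1 (l : List ℝ) : ∀ s : ℝ, s ≠ 0 →
    signChanges (s :: fillFrom s l) = signChanges (s :: l.filter (fun a => decide (a ≠ 0))) := by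
  induction l with
  | nil => intro s _; rfl
  | cons a t ih =>
    intro s hs
    by_cases ha : a = 0
    · subst ha
      rw [fillFrom_cons_zero, filter_cons_zero, sc_cons_cons]
      have h1 : ¬ (s * sgn s < 0) := not_lt.mpr (sgn_same_sign hs).le
      rw [if_neg h1, ih (sgn s) (sgn_ne s)]
      rw [sc_head_congr (by have := sgn_same_sign hs; nlinarith : (0:ℝ) < sgn s * s)]
      omega
    · rw [fillFrom_cons_nz ha, filter_cons_nz ha, sc_cons_cons, sc_cons_cons, ih a ha]

lemma filllast (l : List ℝ) : ∀ s s' : ℝ, s ≠ 0 → 0 < s * s' →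
    0 < lastNZ s (fillFrom s l) * lastNZ s' (l.filter (fun a => decide (a ≠ 0))) := by
  induction l with
  | nil => intro s s' _ h; exact h
  | cons a t ih =>
    intro s s' hs h
    by_cases ha : a = 0
    · subst ha
      rw [fillFrom_cons_zero, filter_cons_zero, lastNZ_cons]
      exact ih (sgn s) s' (sgn_ne s)
        (pos_trans (by have := sgn_same_sign hs; nlinarith : (0:ℝ) < sgn s * s) h)
    · rw [fillFrom_cons_nz ha, filter_cons_nz ha, lastNZ_cons, lastNZ_cons]
      exact ih a a ha (mul_self_pos.mpr ha)

lemma fillrel (l : List ℝ) : ∀ s : ℝ,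
    List.Forall₂ (fun a b => (a = 0 ∧ (b = 1 ∨ b = -1)) ∨ (a ≠ 0 ∧ b = a)) l (fillFrom s l) := by
  induction l with
  | nil => intro s; exact List.Forall₂.nil
  | cons a t ih =>
    intro s
    by_cases ha : a = 0
    · subst ha
      rw [fillFrom_cons_zero]
      exact List.Forall₂.cons (Or.inl ⟨rfl, by unfold sgn; split <;> simp⟩) (ih _)
    · rw [fillFrom_cons_nz ha]
      exact List.Forall₂.cons (Or.inr ⟨ha, rfl⟩) (ih _)

lemma fill_append (w : List ℝ) : ∀ (s : ℝ) (z : List ℝ),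
    fillFrom s (w ++ z) = fillFrom s w ++ fillFrom (lastNZ s (fillFrom s w)) z := by
  induction w with
  | nil => intro s z; rfl
  | cons a w ih =>
    intro s z
    by_cases ha : a = 0
    · subst ha
      simp only [List.cons_append, fillFrom_cons_zero, ih, lastNZ_cons]
    · simp only [List.cons_append, fillFrom_cons_nz ha, ih, lastNZ_cons]

lemma fill_length (l : List ℝ) : ∀ s : ℝ, (fillFrom s l).length = l.length := by
  induction l with
  | nil => intro s; rfl
  | cons a t ih =>
    intro s
    by_cases ha : a = 0
    · subst ha; rw [fillFrom_cons_zero]; simp [ih]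
    · rw [fillFrom_cons_nz ha]; simp [ih]

section Rot
variable {n : ℕ}

lemma ofFn_rot (x : Fin n → ℝ) (q : Fin n) [NeZero n] :
    (List.ofFn x).rotate q.val = List.ofFn (fun k => x (q + k)) := by
  apply List.ext_getElem
  · simp
  · intro i h1 h2
    rw [List.getElem_rotate, List.getElem_ofFn, List.getElem_ofFn]
    congr 1
    have hn : (List.ofFn x).length = n := by simp
    apply Fin.ext
    simp only [Fin.add_def, hn]
    rw [Nat.add_comm]

lemma rotList_eq (x : Fin n → ℝ) (q : Fin n) [NeZero n] :
    rotList x q = List.ofFn (fun k => x (q + k)) ++ [x q] := by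
  rw [rotList, ofFn_rot]

lemma filter_rotList (x : Fin n → ℝ) (j : Fin n) :
    (rotList x j).filter (fun a => decide (a ≠ 0)) =
      ((List.ofFn x).drop j.val).filter (fun a => decide (a ≠ 0)) ++
      ((List.ofFn x).take j.val).filter (fun a => decide (a ≠ 0)) ++
      ([x j].filter (fun a => decide (a ≠ 0))) := by
  rw [rotList, List.rotate_eq_drop_append_take (by simp [Nat.le_of_lt j.isLt])]
  simp [List.filter_append]

lemma cyc_drop_take (x : Fin n → ℝ) (j : Fin n) :
    cyc (((List.ofFn x).drop j.val).filter (fun a => decide (a ≠ 0)) ++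
      ((List.ofFn x).take j.val).filter (fun a => decide (a ≠ 0))) =
      cyc ((List.ofFn x).filter (fun a => decide (a ≠ 0))) := by
  rw [cyc_append_comm, ← List.filter_append, List.take_append_drop]

lemma drop_filter_eq (x : Fin n → ℝ) (j : Fin n) (hj : x j ≠ 0) :
    ((List.ofFn x).drop j.val).filter (fun a => decide (a ≠ 0)) =
      x j :: ((List.ofFn x).drop (j.val + 1)).filter (fun a => decide (a ≠ 0)) := by
  rw [List.drop_eq_getElem_cons (by simp [j.isLt])]
  rw [List.getElem_ofFn]
  simp only [Fin.eta]
  rw [List.filter_cons_of_pos (by simpa using hj)]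

lemma sMinusList_rot_eq (x : Fin n → ℝ) (q : Fin n) (hq : x q ≠ 0) :
    sMinusList (rotList x q) = cyc ((List.ofFn x).filter (fun a => decide (a ≠ 0))) := by
  rw [sMinusList, filter_rotList, drop_filter_eq x q hq]
  rw [List.filter_cons_of_pos (by simpa using hq), List.filter_nil]
  rw [← cyc_drop_take x q, drop_filter_eq x q hq]
  show signChanges _ = cyc (x q :: _)
  rw [cyc]
  congr 1

lemma sMinusList_rot_le (x : Fin n → ℝ) (j : Fin n) :
    sMinusList (rotList x j) ≤ cyc ((List.ofFn x).filter (fun a => decide (a ≠ 0))) := by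
  by_cases hj : x j = 0
  · rw [sMinusList, filter_rotList]
    rw [List.filter_cons_of_neg (by simp [hj]), List.filter_nil, List.append_nil]
    rw [← cyc_drop_take x j]
    exact sc_le_cyc _
  · rw [sMinusList_rot_eq x j hj]

lemma sMinusC_le_rot (x : Fin n → ℝ) (q : Fin n) (hq : x q ≠ 0) :
    sMinusC x ≤ sMinusList (rotList x q) := by
  rw [sMinusC]
  apply Finset.sup_le
  intro i _
  rw [sMinusList_rot_eq x q hq]
  exact sMinusList_rot_le x i

end Rot

/-- Realize a fill of the rotated vector as `replZeros`. -/
lemma fill_realize {n : ℕ} [NeZero n] (x : Fin n → ℝ) (q : Fin n) (w : List ℝ)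
    (hrel : List.Forall₂ (fun a b => (a = 0 ∧ (b = 1 ∨ b = -1)) ∨ (a ≠ 0 ∧ b = a))
      (List.ofFn (fun k => x (q + k))) w) :
    ∃ ε : Fin n → Bool, rotList (replZeros x ε) q = w ++ [w.getD 0 0] := by
  classical
  have hlen : w.length = n := by simpa using hrel.length_eq.symm
  have hget : ∀ k : Fin n,
      (x (q + k) = 0 ∧ (w.getD k.val 0 = 1 ∨ w.getD k.val 0 = -1)) ∨
      (x (q + k) ≠ 0 ∧ w.getD k.val 0 = x (q + k)) := by
    intro k
    have h2 : k.val < w.length := by rw [hlen]; exact k.isLt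
    rw [List.getD_eq_getElem w 0 h2]
    have h1 : k.val < (List.ofFn (fun k => x (q + k))).length := by simp
    have := (List.forall₂_iff_get.mp hrel).2 k.val h1 h2
    simpa using this
  refine ⟨fun j => decide (w.getD (j - q).val 0 = 1), ?_⟩
  have hpt : ∀ k : Fin n,
      replZeros x (fun j => decide (w.getD (j - q).val 0 = 1)) (q + k) = w.getD k.val 0 := by
    intro k
    have hk : (q + k) - q = k := add_sub_cancel_left q k
    have h2 : k.val < w.length := by rw [hlen]; exact k.isLt
    rcases hget k with ⟨hz, h1 | h1⟩ | ⟨hz, h1⟩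
    · rw [List.getD_eq_getElem w 0 h2] at h1 ⊢
      simp [replZeros, hz, hk, h1, List.getD_eq_getElem w 0 h2, List.getElem?_eq_getElem h2]
    · rw [List.getD_eq_getElem w 0 h2] at h1 ⊢
      simp only [replZeros, hz, if_true, hk, h1, List.getD_eq_getElem w 0 h2,
        List.getElem?_eq_getElem h2, if_pos]
      norm_num
    · rw [List.getD_eq_getElem w 0 h2] at h1 ⊢
      simp [replZeros, hz, hk, h1, List.getD_eq_getElem w 0 h2, List.getElem?_eq_getElem h2]
  rw [rotList_eq]
  have h0 : replZeros x (fun j => decide (w.getD (j - q).val 0 = 1)) q = w.getD 0 0 := by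
    have := hpt 0
    rwa [add_zero, Fin.val_zero] at this
  rw [h0]
  congr 1
  apply List.ext_getElem (by simp [hlen])
  intro i hi1 hi2
  rw [List.getElem_ofFn]
  have := hpt ⟨i, by simpa using hi1⟩
  rw [this, List.getD_eq_getElem w 0 (by omega)]

lemma sMinusC_le_sPlusC {n : ℕ} [NeZero n] (x : Fin n → ℝ) (hx : x ≠ 0) :
    sMinusC x ≤ sPlusC x := by
  obtain ⟨m, rfl⟩ : ∃ m, n = m + 1 := Nat.exists_eq_succ_of_ne_zero (NeZero.ne n)
  obtain ⟨q, hq⟩ := Function.ne_iff.mp hx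
  simp only [Pi.zero_apply] at hq
  set z : Fin (m + 1) → ℝ := fun k => x (q + k) with hz
  set w := fillFrom (x q) (List.ofFn z) with hw
  obtain ⟨ε, hε⟩ := fill_realize x q w (fillrel (List.ofFn z) (x q))
  have hz0 : z 0 = x q := by rw [hz]; simp
  have hsplit : List.ofFn z = x q :: List.ofFn (z ∘ Fin.succ) := by
    rw [List.ofFn_succ, hz0]; rfl
  have hwc : w = x q :: fillFrom (x q) (List.ofFn (z ∘ Fin.succ)) := by
    rw [hw, hsplit, fillFrom_cons_nz hq]
  have hgd : w.getD 0 0 = x q := by rw [hwc]; rfl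
  have hkey : signChanges (rotList (replZeros x ε) q) = sMinusList (rotList x q) := by
    rw [hε, hgd, hwc]
    have h1 : (x q :: fillFrom (x q) (List.ofFn (z ∘ Fin.succ))) ++ [x q]
        = x q :: fillFrom (x q) (List.ofFn (z ∘ Fin.succ) ++ [x q]) := by
      rw [fill_append, fillFrom_cons_nz hq, fillFrom_nil]
      simp
    rw [h1, fill1 _ _ hq, sMinusList, rotList_eq, ← hz, hsplit]
    show _ = signChanges (List.filter _ (x q :: (List.ofFn (z ∘ Fin.succ) ++ [x q])))
    rw [filter_cons_nz hq]
  calc sMinusC x ≤ sMinusList (rotList x q) := sMinusC_le_rot x q hq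
  _ = signChanges (rotList (replZeros x ε) q) := hkey.symm
  _ ≤ sPlusC x := Finset.le_sup (f := fun p : (Fin (m+1) → Bool) × Fin (m+1) =>
      signChanges (rotList (replZeros x p.1) p.2)) (Finset.mem_univ (ε, q))

lemma strict_lt_of_consec_zeros {n : ℕ} [NeZero n] (x : Fin n → ℝ) (hx : x ≠ 0)
    (i₀ : Fin n) (h0 : x i₀ = 0) (h1 : x (i₀ + 1) = 0) :
    sMinusC x + 1 ≤ sPlusC x := by
  classical
  obtain ⟨m, rfl⟩ : ∃ m, n = m + 1 := Nat.exists_eq_succ_of_ne_zero (NeZero.ne n)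
  obtain ⟨q, hq⟩ := Function.ne_iff.mp hx
  simp only [Pi.zero_apply] at hq
  set z : Fin (m + 1) → ℝ := fun k => x (q + k) with hz
  set s : ℝ := x q with hs
  set k₀ : Fin (m + 1) := i₀ - q with hk₀
  have hz0 : z 0 = s := by rw [hz]; simp [hs]
  have hzk0 : z k₀ = 0 := by
    show x (q + k₀) = 0
    rw [hk₀, add_sub_cancel]; exact h0
  have hzk1 : z (k₀ + 1) = 0 := by
    show x (q + (k₀ + 1)) = 0
    rw [hk₀, ← add_assoc, add_sub_cancel]; exact h1
  have hk0ne : k₀ ≠ 0 := by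
    intro h
    rw [h, hz0] at hzk0
    exact hq hzk0
  have hk0pos : 1 ≤ k₀.val := by
    rcases Nat.eq_zero_or_pos k₀.val with h | h
    · exact absurd (Fin.ext h) hk0ne
    · exact h
  have hlt : k₀.val + 1 < m + 1 := by
    rcases Nat.lt_or_ge (k₀.val + 1) (m + 1) with h | h
    · exact h
    · exfalso
      have hv : k₀.val + 1 = m + 1 := le_antisymm (k₀.isLt) h
      have : k₀ + 1 = 0 := by
        apply Fin.ext
        rw [Fin.add_def]
        simp [hv]
      rw [this, hz0] at hzk1
      exact hq hzk1
  have hlen : (List.ofFn z).length = m + 1 := by simp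
  set u₀ : List ℝ := (List.ofFn (z ∘ Fin.succ)).take (k₀.val - 1) with hu₀
  set v : List ℝ := (List.ofFn z).drop (k₀.val + 2) with hv
  have htake : (List.ofFn z).take k₀.val = s :: u₀ := by
    rw [List.ofFn_succ]
    obtain ⟨r, hr⟩ : ∃ r, k₀.val = r + 1 := ⟨k₀.val - 1, by omega⟩
    rw [hr, List.take_succ_cons, hz0, hu₀, hr]
    rfl
  have hdrop : (List.ofFn z).drop k₀.val = 0 :: 0 :: v := by
    rw [List.drop_eq_getElem_cons (by omega), List.drop_eq_getElem_cons (by omega)]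
    have e1 : (List.ofFn z)[k₀.val]'(by omega) = z k₀ := by
      rw [List.getElem_ofFn]
    have e2 : (List.ofFn z)[k₀.val + 1]'(by omega) = z (k₀ + 1) := by
      rw [List.getElem_ofFn]
      refine congrArg z (Fin.ext ?_)
      rw [Fin.add_def]
      simp [Nat.mod_eq_of_lt hlt]
    rw [e1, e2, hzk0, hzk1, hv]
  have hdecomp : List.ofFn z = (s :: u₀) ++ (0 :: 0 :: v) := by
    conv_lhs => rw [← List.take_append_drop k₀.val (List.ofFn z)]
    rw [htake, hdrop]
  set t : ℝ := lastNZ s (u₀.filter (fun a => decide (a ≠ 0))) with ht_def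
  set b : ℝ := if 0 < t then (-1 : ℝ) else 1 with hb_def
  set c : ℝ := -b with hc_def
  have hb1 : b = 1 ∨ b = -1 := by rw [hb_def]; split <;> simp
  have hbne : b ≠ 0 := by rcases hb1 with h | h <;> rw [h] <;> norm_num
  have hcne : c ≠ 0 := by simpa [hc_def] using hbne
  have hc1 : c = 1 ∨ c = -1 := by
    rcases hb1 with h | h
    · right; rw [hc_def, h]
    · left; rw [hc_def, h]; norm_num
  set w : List ℝ := (s :: fillFrom s u₀) ++ (b :: c :: fillFrom c v) with hw
  have hrel : List.Forall₂ (fun a b => (a = 0 ∧ (b = 1 ∨ b = -1)) ∨ (a ≠ 0 ∧ b = a))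
      (List.ofFn (fun k => x (q + k))) w := by
    rw [← hz, hdecomp, hw]
    refine List.rel_append ?_ ?_
    · exact List.Forall₂.cons (Or.inr ⟨hq, rfl⟩) (fillrel u₀ s)
    · exact List.Forall₂.cons (Or.inl ⟨rfl, hb1⟩)
        (List.Forall₂.cons (Or.inl ⟨rfl, hc1⟩) (fillrel v c))
  obtain ⟨ε, hε⟩ := fill_realize x q w hrel
  have hgd : w.getD 0 0 = s := by rw [hw]; rfl
  rw [hgd] at hε
  -- sign facts
  have ht' : 0 < lastNZ s (fillFrom s u₀) * t := filllast u₀ s s hq (mul_self_pos.mpr hq)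
  have htne : t ≠ 0 := by
    intro h
    rw [h, mul_zero] at ht'
    exact lt_irrefl 0 ht'
  have htb : t * b < 0 := by
    rw [hb_def]
    split
    · next h => simpa using h
    · next h => simpa using lt_of_le_of_ne (not_lt.mp h) htne
  have ht'b : lastNZ s (fillFrom s u₀) * b < 0 := neg_trans ht' htb
  have hbc : b * c < 0 := by
    rw [hc_def, mul_neg]
    simpa using mul_self_pos.mpr hbne
  have htc : 0 < t * c := by
    rw [hc_def, mul_neg]
    simpa using htb
  -- count of the filled rotation
  have hN : signChanges (rotList (replZeros x ε) q) ≥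
      signChanges (s :: u₀.filter (fun a => decide (a ≠ 0))) + 2 + signChanges (c :: v.filter (fun a => decide (a ≠ 0))) := by
    rw [hε, hw]
    have e : ((s :: fillFrom s u₀) ++ (b :: c :: fillFrom c v)) ++ [s]
        = s :: (fillFrom s u₀ ++ (b :: c :: (fillFrom c v ++ [s]))) := by simp
    rw [e, sc_append, sc_cons_cons, sc_cons_cons, if_pos ht'b, if_pos hbc]
    have e2 : fillFrom c v ++ [s] = fillFrom c (v ++ [s]) := by
      rw [fill_append, fillFrom_cons_nz hq, fillFrom_nil]
    have e3 : signChanges (c :: (fillFrom c v ++ [s]))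
        = signChanges (c :: (v.filter (fun a => decide (a ≠ 0)) ++ [s])) := by
      rw [e2, fill1 _ _ hcne]
      congr 2
      rw [List.filter_append]
      congr 1
      exact filter_cons_nz hq []
    rw [e3, sc_append, fill1 _ _ hq]
    omega
  -- count of the unfilled rotation
  have hM : sMinusList (rotList x q) ≤
      signChanges (s :: u₀.filter (fun a => decide (a ≠ 0))) + 1 + signChanges (c :: v.filter (fun a => decide (a ≠ 0))) := by
    rw [sMinusList, rotList_eq, ← hz, ← hs, hdecomp]
    have e : ((s :: u₀) ++ (0 :: 0 :: v)) ++ [s] = s :: (u₀ ++ (0 :: 0 :: (v ++ [s]))) := by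
      simp
    rw [e, filter_cons_nz hq, List.filter_append]
    have e2 : List.filter (fun a => decide (a ≠ 0)) (0 :: 0 :: (v ++ [s])) = v.filter (fun a => decide (a ≠ 0)) ++ [s] := by
      rw [filter_cons_zero, filter_cons_zero, List.filter_append]
      congr 1
      exact filter_cons_nz hq []
    rw [e2, sc_append, ← ht_def, sc_append]
    have e4 : signChanges (t :: v.filter (fun a => decide (a ≠ 0))) = signChanges (c :: v.filter (fun a => decide (a ≠ 0))) :=
      sc_head_congr htc _
    have e5 : signChanges (lastNZ t (v.filter (fun a => decide (a ≠ 0))) :: [s]) ≤ 1 := by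
      rw [sc_cons_cons, sc_single]
      split <;> omega
    omega
  have hfin : signChanges (rotList (replZeros x ε) q) ≤ sPlusC x :=
    Finset.le_sup (f := fun p : (Fin (m+1) → Bool) × Fin (m+1) =>
      signChanges (rotList (replZeros x p.1) p.2)) (Finset.mem_univ (ε, q))
  have hC : sMinusC x ≤ sMinusList (rotList x q) := sMinusC_le_rot x q hq
  omega

end Aux

/-- If `x : (a,∞) → ℝⁿ` is nonvanishing and satisfies
`s_c⁺(x(t)) ≤ s_c⁻(x(t₀))` whenever `a < t₀ < t`, then there is a time `T`
after which `s_c⁻(x(τ)) = s_c⁺(x(τ))` and no two cyclically consecutive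
entries of `x(τ)` are both zero. -/
theorem eventually_in_Vc (n : ℕ) [NeZero n] (a : ℝ) (x : ℝ → Fin n → ℝ)
    (hx : ∀ t, a < t → x t ≠ 0)
    (h : ∀ t₀ t : ℝ, a < t₀ → t₀ < t → sPlusC (x t) ≤ sMinusC (x t₀)) :
    ∃ T : ℝ, a < T ∧ ∀ τ, T ≤ τ →
      (sMinusC (x τ) = sPlusC (x τ) ∧
        ∀ i : Fin n, ¬(x τ i = 0 ∧ x τ (i + 1) = 0)) := by
  classical
  have hanti : ∀ t₀ t : ℝ, a < t₀ → t₀ < t → sMinusC (x t) ≤ sMinusC (x t₀) := fun t₀ t h1 h2 =>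
    le_trans (sMinusC_le_sPlusC (x t) (hx t (h1.trans h2))) (h t₀ t h1 h2)
  set S : Set ℕ := (fun t => sMinusC (x t)) '' (Set.Ioi a) with hS_def
  have hS : S.Nonempty := ⟨sMinusC (x (a + 1)), ⟨a + 1, by simp, rfl⟩⟩
  obtain ⟨t₁, ht₁, hft₁⟩ := Nat.sInf_mem hS
  have ht₁a : a < t₁ := ht₁
  refine ⟨t₁ + 1, by linarith, ?_⟩
  intro τ hτ
  have hτa : a < τ := by linarith
  have hxτ := hx τ hτa
  have hfτ : sMinusC (x τ) = sInf S := by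
    apply le_antisymm
    · rw [← hft₁]; exact hanti t₁ τ ht₁a (by linarith)
    · exact Nat.sInf_le ⟨τ, hτa, rfl⟩
  set t' : ℝ := (t₁ + τ) / 2 with ht'_def
  have h1 : t₁ < t' := by rw [ht'_def]; linarith
  have h2 : t' < τ := by rw [ht'_def]; linarith
  have ht'a : a < t' := by linarith
  have hft' : sMinusC (x t') = sInf S := by
    apply le_antisymm
    · rw [← hft₁]; exact hanti t₁ t' ht₁a h1
    · exact Nat.sInf_le ⟨t', ht'a, rfl⟩
  have hle : sPlusC (x τ) ≤ sInf S := by rw [← hft']; exact h t' τ ht'a h2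
  have heq : sMinusC (x τ) = sPlusC (x τ) := by
    have := sMinusC_le_sPlusC (x τ) hxτ
    omega
  refine ⟨heq, ?_⟩
  rintro i ⟨hi0, hi1⟩
  have := strict_lt_of_consec_zeros (x τ) hxτ i hi0 hi1
  omega
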